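/- arXiv:2409.00351 — 2 statements merged into one kernel-verified Lean document; each statement's English description precedes it below -/
import Mathlib

section
/- Let R be a commutative ring and let q ∈ R be such that q and q² are both roots of unity of order N. Then for every i, j ∈ {1,2,3}, the element X_ij^N is central in O_q(SL_3), i.e., X_ij^N commutes with every element of O_q(SL_3). -/
noncomputable section

namespace QSL3

/-- Number of inversions of a permutation of `Fin 3`. -/
def len (σ : Equiv.Perm (Fin 3)) : ℕ :=
  (Finset.univ.filter fun p : Fin 3 × Fin 3 => p.1 < p.2 ∧ σ p.2 < σ p.1).card

variable (R : Type) [CommRing R] (q : Rˣ)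

/-- The generator `X i j` of the free algebra. -/
def gen (i j : Fin 3) : FreeAlgebra R (Fin 3 × Fin 3) := FreeAlgebra.ι R (i, j)

/-- The defining relations of the quantum group `O_q(SL_3)`. -/
inductive Rel : FreeAlgebra R (Fin 3 × Fin 3) → FreeAlgebra R (Fin 3 × Fin 3) → Prop
  | q_comm (i j l m : Fin 3) (h : (l < i ∧ j = m) ∨ (i = l ∧ m < j)) :
      Rel (gen R i j * gen R l m) (((q⁻¹ : Rˣ) : R) • (gen R l m * gen R i j))
  | comm (i j l m : Fin 3) (h : i < l ∧ m < j) :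
      Rel (gen R i j * gen R l m) (gen R l m * gen R i j)
  | exch (i j l m : Fin 3) (h : l < i ∧ m < j) :
      Rel (gen R i j * gen R l m)
        (gen R l m * gen R i j - ((q : R) - ((q⁻¹ : Rˣ) : R)) • (gen R i m * gen R l j))
  | det : Rel (∑ σ : Equiv.Perm (Fin 3),
      (-(q : R)) ^ len σ • (gen R (σ 0) 0 * gen R (σ 1) 1 * gen R (σ 2) 2)) 1

/-- The quantum group `O_q(SL_3)`. -/
def Oq := RingQuot (Rel R q)

instance : Ring (Oq R q) := inferInstanceAs (Ring (RingQuot (Rel R q)))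
instance : Algebra R (Oq R q) := inferInstanceAs (Algebra R (RingQuot (Rel R q)))

/-- The generator `X i j` of `O_q(SL_3)`. -/
def X (i j : Fin 3) : Oq R q := RingQuot.mkAlgHom R (Rel R q) (gen R i j)

/-- `σ1`, the trace of the matrix of generators. -/
def s1 : Oq R q := X R q 0 0 + X R q 1 1 + X R q 2 2

/-- `σ2`, the sum of the principal 2×2 quantum minors. -/
def s2 : Oq R q :=
  (X R q 0 0 * X R q 1 1 - (q : R) • (X R q 0 1 * X R q 1 0))
  + (X R q 0 0 * X R q 2 2 - (q : R) • (X R q 0 2 * X R q 2 0))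
  + (X R q 1 1 * X R q 2 2 - (q : R) • (X R q 1 2 * X R q 2 1))

/-- `q` is a root of unity of order `N`. -/
def IsRootOfOrder (x : R) (N : ℕ) : Prop :=
  x ^ N = 1 ∧ ∀ k : ℕ, 0 < k → k < N → x ^ k ≠ 1

end QSL3

/-- The power sum polynomials `P^(N)`. -/
def powerSum : ℕ → MvPolynomial (Fin 2) ℤ
  | 0 => 3
  | 1 => MvPolynomial.X 0
  | 2 => MvPolynomial.X 0 ^ 2 - 2 * MvPolynomial.X 1
  | (n+3) => MvPolynomial.X 0 * powerSum (n+2) - MvPolynomial.X 1 * powerSum (n+1) + powerSum n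

/-- Evaluation of a polynomial in two (commuting) variables at a pair of elements of a
possibly noncommutative ring, sending the monomial `x^a * y^b` to `u^a * v^b`. -/
def evalP {A : Type*} [Ring A] (p : MvPolynomial (Fin 2) ℤ) (u v : A) : A :=
  (AddMonoidAlgebra.coeff p).sum fun m c => c • (u ^ m 0 * v ^ m 1)

/-! The relations of `O_q(SL_3)` say that every generator `u = X_ij` either commutes with
another generator `v`, or `q^{±1}`-commutes with it, or satisfies an exchange relation
`u v = v u + t w` in which `w` is a product of two generators `q^{±1}`-commuting with `u`,
so that `u w = q^{±2} w u`. In the first two cases `u^N` commutes with `v` because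
`q^N = 1`. In the exchange case `u^N v = v u^N + t (1 + μ + ⋯ + μ^{N-1}) w u^{N-1}` with
`μ = q^{±2}`, and `t = ±(q - q⁻¹)` is annihilated by the geometric sum because
`(q^2 - 1)(1 + q^2 + ⋯ + q^{2(N-1)}) = q^{2N} - 1 = 0`. The generators generate the algebra,
so `u^N` is central. -/

section SkewCommutation

variable {R : Type*} [CommRing R] {A : Type*} [Ring A] [Algebra R A]

theorem pow_mul_of_mul_eq_smul {u v : A} {μ : R} (h : u * v = μ • (v * u)) (n : ℕ) :
    u ^ n * v = μ ^ n • (v * u ^ n) := by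
  induction n with
  | zero => simp
  | succ n ih =>
    rw [pow_succ, mul_assoc, h, mul_smul_comm, ← mul_assoc, ih, smul_mul_assoc,
      smul_smul, mul_assoc, ← pow_succ, ← pow_succ']

theorem commute_pow_of_mul_eq_smul {u v : A} {μ : R} (h : u * v = μ • (v * u)) {N : ℕ}
    (hμ : μ ^ N = 1) : Commute (u ^ N) v := by
  rw [Commute, SemiconjBy, pow_mul_of_mul_eq_smul h N, hμ, one_smul]

theorem mul_eq_smul_of_mul_eq_inv_smul {u v : A} {c : Rˣ}
    (h : u * v = (↑c⁻¹ : R) • (v * u)) : v * u = (c : R) • (u * v) := by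
  rw [h, smul_smul, Units.mul_inv, one_smul]

theorem mul_mul_eq_smul_of_mul_eq_smul {u a b : A} {c d : R} (ha : u * a = c • (a * u))
    (hb : u * b = d • (b * u)) : u * (a * b) = (c * d) • (a * b * u) := by
  rw [← mul_assoc, ha, smul_mul_assoc, mul_assoc, hb, mul_smul_comm, smul_smul, mul_assoc]

theorem pow_succ_mul_of_mul_eq_add_smul {u v w : A} {t μ : R} (h : u * v = v * u + t • w)
    (hw : u * w = μ • (w * u)) (n : ℕ) :
    u ^ (n + 1) * v
      = v * u ^ (n + 1) + (t * ∑ k ∈ Finset.range (n + 1), μ ^ k) • (w * u ^ n) := by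
  induction n with
  | zero => simpa using h
  | succ n ih =>
    rw [pow_succ', mul_assoc, ih, mul_add, ← mul_assoc, h, mul_smul_comm, ← mul_assoc, hw,
      smul_mul_assoc, smul_smul, add_mul, smul_mul_assoc, mul_assoc v, ← pow_succ',
      mul_assoc w, ← pow_succ', add_assoc, ← add_smul, geom_sum_succ (n := n + 1)]
    congr 2
    ring

theorem commute_pow_of_mul_eq_add_smul {u v w : A} {t μ : R} (h : u * v = v * u + t • w)
    (hw : u * w = μ • (w * u)) {N : ℕ} (hN : t * ∑ k ∈ Finset.range N, μ ^ k = 0) :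
    Commute (u ^ N) v := by
  cases N with
  | zero => rw [pow_zero]; exact Commute.one_left v
  | succ n => rw [Commute, SemiconjBy, pow_succ_mul_of_mul_eq_add_smul h hw n, hN, zero_smul,
      add_zero]

end SkewCommutation

theorem Units.sub_inv_mul_geom_sum_sq_eq_zero {R : Type*} [CommRing R] {c : Rˣ} {N : ℕ}
    (hc : c ^ N = 1) : ((c : R) - ↑c⁻¹) * ∑ k ∈ Finset.range N, ((c : R) ^ 2) ^ k = 0 := by
  have hsub : (c : R) - ↑c⁻¹ = ↑c⁻¹ * ((c : R) ^ 2 - 1) := by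
    linear_combination (-(c : R)) * c.mul_inv
  rw [hsub, mul_assoc, mul_geom_sum, ← pow_mul, mul_comm 2 N, pow_mul,
    ← Units.val_pow_eq_pow_val, hc, Units.val_one, one_pow, sub_self, mul_zero]

namespace QSL3

variable {R : Type} [CommRing R] {q : Rˣ}

theorem X_mul_X_same_col {i l : Fin 3} (j : Fin 3) (h : l < i) :
    X R q i j * X R q l j = (↑q⁻¹ : R) • (X R q l j * X R q i j) := by
  have hrel := RingQuot.mkAlgHom_rel R (Rel.q_comm (R := R) (q := q) i j l j (Or.inl ⟨h, rfl⟩))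
  rw [map_mul, map_smul, map_mul] at hrel
  exact hrel

theorem X_mul_X_same_row (i : Fin 3) {j m : Fin 3} (h : m < j) :
    X R q i j * X R q i m = (↑q⁻¹ : R) • (X R q i m * X R q i j) := by
  have hrel := RingQuot.mkAlgHom_rel R (Rel.q_comm (R := R) (q := q) i j i m (Or.inr ⟨rfl, h⟩))
  rw [map_mul, map_smul, map_mul] at hrel
  exact hrel

theorem commute_X_X {i j l m : Fin 3} (hil : i < l) (hmj : m < j) :
    Commute (X R q i j) (X R q l m) := by
  have hrel := RingQuot.mkAlgHom_rel R (Rel.comm (R := R) (q := q) i j l m ⟨hil, hmj⟩)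
  rw [map_mul, map_mul] at hrel
  exact hrel

theorem X_mul_X_exchange {i j l m : Fin 3} (hli : l < i) (hmj : m < j) :
    X R q i j * X R q l m
      = X R q l m * X R q i j - ((q : R) - ↑q⁻¹) • (X R q i m * X R q l j) := by
  have hrel := RingQuot.mkAlgHom_rel R (Rel.exch (R := R) (q := q) i j l m ⟨hli, hmj⟩)
  rw [map_mul, map_sub, map_mul, map_smul, map_mul] at hrel
  exact hrel

variable {N : ℕ}

theorem commute_X_pow_X_of_lt_of_lt (hq : q ^ N = 1) {i j l m : Fin 3} (hil : i < l)
    (hjm : j < m) : Commute (X R q i j ^ N) (X R q l m) := by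
  refine commute_pow_of_mul_eq_add_smul (t := (q : R) - ↑q⁻¹) (w := X R q l j * X R q i m) ?_
    (mul_mul_eq_smul_of_mul_eq_smul
      (mul_eq_smul_of_mul_eq_inv_smul (X_mul_X_same_col j hil))
      (mul_eq_smul_of_mul_eq_inv_smul (X_mul_X_same_row i hjm)))
    (by simpa only [sq] using Units.sub_inv_mul_geom_sum_sq_eq_zero hq)
  rw [X_mul_X_exchange hil hjm, sub_add_cancel]

theorem commute_X_pow_X_of_gt_of_gt (hq : q ^ N = 1) {i j l m : Fin 3} (hli : l < i)
    (hmj : m < j) : Commute (X R q i j ^ N) (X R q l m) := by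
  refine commute_pow_of_mul_eq_add_smul (t := ↑q⁻¹ - (q : R)) (w := X R q i m * X R q l j) ?_
    (mul_mul_eq_smul_of_mul_eq_smul (X_mul_X_same_row i hmj) (X_mul_X_same_col j hli))
    (by simpa only [inv_inv, sq] using
      Units.sub_inv_mul_geom_sum_sq_eq_zero (c := q⁻¹) (by rw [inv_pow, hq, inv_one]))
  rw [X_mul_X_exchange hli hmj, sub_eq_add_neg, ← neg_smul, neg_sub]

theorem commute_X_pow_X (hq : q ^ N = 1) (i j l m : Fin 3) :
    Commute (X R q i j ^ N) (X R q l m) := by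
  have hq' : (q : R) ^ N = 1 := by rw [← Units.val_pow_eq_pow_val, hq, Units.val_one]
  have hqinv : (↑q⁻¹ : R) ^ N = 1 := by
    rw [← Units.val_pow_eq_pow_val, inv_pow, hq, inv_one, Units.val_one]
  rcases lt_trichotomy i l with hil | rfl | hli <;>
    rcases lt_trichotomy j m with hjm | rfl | hmj
  · exact commute_X_pow_X_of_lt_of_lt hq hil hjm
  · exact commute_pow_of_mul_eq_smul (mul_eq_smul_of_mul_eq_inv_smul (X_mul_X_same_col j hil)) hq'
  · exact (commute_X_X hil hmj).pow_left N
  · exact commute_pow_of_mul_eq_smul (mul_eq_smul_of_mul_eq_inv_smul (X_mul_X_same_row i hjm)) hq'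
  · exact (Commute.refl _).pow_left N
  · exact commute_pow_of_mul_eq_smul (X_mul_X_same_row i hmj) hqinv
  · exact ((commute_X_X hli hjm).symm).pow_left N
  · exact commute_pow_of_mul_eq_smul (X_mul_X_same_col j hli) hqinv
  · exact commute_X_pow_X_of_gt_of_gt hq hli hmj

theorem commute_of_forall_commute_X {z : Oq R q} (hz : ∀ l m, Commute z (X R q l m))
    (y : Oq R q) : Commute z y := by
  obtain ⟨x, rfl⟩ := RingQuot.mkAlgHom_surjective R (Rel R q) y
  induction x using FreeAlgebra.induction with
  | grade0 r => rw [AlgHom.commutes]; exact (Algebra.commutes r z).symm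
  | grade1 p => exact hz p.1 p.2
  | mul a b ha hb => rw [map_mul]; exact ha.mul_right hb
  | add a b ha hb => rw [map_add]; exact ha.add_right hb

end QSL3

theorem X_pow_central_general (R : Type) [CommRing R] (q : Rˣ) (N : ℕ)
    (hq : QSL3.IsRootOfOrder R (q : R) N) :
    ∀ i j : Fin 3, ∀ y : QSL3.Oq R q,
      QSL3.X R q i j ^ N * y = y * QSL3.X R q i j ^ N := by
  have hqN : q ^ N = 1 := Units.ext (by simpa using hq.1)
  intro i j y
  exact (QSL3.commute_of_forall_commute_X (QSL3.commute_X_pow_X hqN i j) y).eq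

/-- If `q` and `q²` are both roots of unity of order `N`, then each
`X_ij^N` is central in `O_q(SL_3)`. -/
theorem X_pow_central (R : Type) [CommRing R] (q : Rˣ) (N : ℕ)
    (hq : QSL3.IsRootOfOrder R (q : R) N)
    (hq2 : QSL3.IsRootOfOrder R ((q : R) ^ 2) N) :
    ∀ i j : Fin 3, ∀ y : QSL3.Oq R q,
      QSL3.X R q i j ^ N * y = y * QSL3.X R q i j ^ N :=
  X_pow_central_general R q N hq
end
end

section
/- Let R be a commutative ring and let A be a 3×3 matrix over R with det A = 1. Then for every N ≥ 0, P^(N)(trace A, trace(adjugate A)) = trace(A^N), where P^(N) is evaluated at the pair (trace A, trace(adjugate A)) by substituting these commuting elements of R for x and y. -/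
/-!
By Cayley–Hamilton a 3×3 matrix satisfies `A³ = (tr A) A² − (tr adj A) A + det A`, so when
`det A = 1` the traces of its powers obey the recurrence defining `P^(N)`, and they start with
the same values `3`, `tr A`, `(tr A)² − 2 tr adj A`.
-/

noncomputable section

/-- The ideal generated by `λ1 λ2 λ3 − 1`. -/
def lamIdeal : Ideal (MvPolynomial (Fin 3) ℤ) :=
  Ideal.span {MvPolynomial.X 0 * MvPolynomial.X 1 * MvPolynomial.X 2 - 1}

/-- The ring `Λ = ℤ[λ1, λ2, λ3]/(λ1 λ2 λ3 − 1)`. -/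
def Lam : Type := MvPolynomial (Fin 3) ℤ ⧸ lamIdeal

instance : CommRing Lam :=
  inferInstanceAs (CommRing (MvPolynomial (Fin 3) ℤ ⧸ lamIdeal))

/-- The image of the variable `λ i` in `Λ`. -/
def lam (i : Fin 3) : Lam :=
  Ideal.Quotient.mk lamIdeal (MvPolynomial.X i)

/-- The first elementary symmetric polynomial `E1 = λ1 + λ2 + λ3` in `Λ`. -/
def E1 : Lam := lam 0 + lam 1 + lam 2

/-- The second elementary symmetric polynomial `E2 = λ1λ2 + λ1λ3 + λ2λ3` in `Λ`. -/
def E2 : Lam := lam 0 * lam 1 + lam 0 * lam 2 + lam 1 * lam 2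

namespace Matrix

variable {R : Type*} [CommRing R] (A : Matrix (Fin 3) (Fin 3) R)

theorem pow_three_fin_three :
    A ^ 3 = A.trace • A ^ 2 - A.adjugate.trace • A + A.det • 1 := by
  ext i j
  fin_cases i <;> fin_cases j <;>
    simp only [pow_three, pow_two, one_fin_three, mul_apply, Fin.sum_univ_three, trace_fin_three,
      adjugate_fin_three, det_fin_three, add_apply, sub_apply, smul_apply, smul_eq_mul, of_apply,
      cons_val', cons_val_zero, cons_val_one, cons_val_two, cons_val_fin_one, head_cons,
      tail_cons, head_fin_const, Fin.zero_eta, Fin.mk_one, Fin.reduceFinMk] <;>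
    ring

theorem trace_pow_two_fin_three : (A ^ 2).trace = A.trace ^ 2 - 2 * A.adjugate.trace := by
  simp only [pow_two, trace_fin_three, mul_apply, Fin.sum_univ_three, adjugate_fin_three, of_apply,
    cons_val', cons_val_zero, cons_val_fin_one, cons_val_one, cons_val]
  ring

theorem trace_pow_add_three_fin_three (n : ℕ) :
    (A ^ (n + 3)).trace = A.trace * (A ^ (n + 2)).trace - A.adjugate.trace * (A ^ (n + 1)).trace
      + A.det * (A ^ n).trace := by
  have hpow : A ^ (n + 3) =
      A.trace • A ^ (n + 2) - A.adjugate.trace • A ^ (n + 1) + A.det • A ^ n := by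
    rw [pow_add, pow_three_fin_three, mul_add, mul_sub, mul_smul_comm, mul_smul_comm,
      mul_smul_comm, mul_one, ← pow_add, ← pow_succ]
  simp only [hpow, trace_add, trace_sub, trace_smul, smul_eq_mul]

end Matrix

theorem evalP_eq_eval₂ {R : Type*} [CommRing R] (p : MvPolynomial (Fin 2) ℤ) (u v : R) :
    evalP p u v = MvPolynomial.eval₂ (Int.castRingHom R) ![u, v] p := by
  unfold evalP MvPolynomial.eval₂
  refine Finsupp.sum_congr fun m _ => ?_
  rw [Finsupp.prod_pow]
  simp [Fin.prod_univ_two, zsmul_eq_mul]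

theorem evalP_powerSum_add_three {R : Type*} [CommRing R] (u v : R) (n : ℕ) :
    evalP (powerSum (n + 3)) u v = u * evalP (powerSum (n + 2)) u v
      - v * evalP (powerSum (n + 1)) u v + evalP (powerSum n) u v := by
  simp [evalP_eq_eval₂, powerSum]

/-- For a 3×3 matrix `A` over a commutative ring with `det A = 1`,
`P^(N)(trace A, trace (adjugate A)) = trace (A^N)` for every `N ≥ 0`. -/
theorem powerSum_trace (R : Type) [CommRing R] (A : Matrix (Fin 3) (Fin 3) R)
    (hA : A.det = 1) (N : ℕ) :
    evalP (powerSum N) A.trace A.adjugate.trace = (A ^ N).trace := by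
  induction N using powerSum.induct with
  | case1 => simp [evalP_eq_eval₂, powerSum]
  | case2 => simp [evalP_eq_eval₂, powerSum]
  | case3 => simp [evalP_eq_eval₂, powerSum, Matrix.trace_pow_two_fin_three]
  | case4 n ih₂ ih₁ ih₀ =>
    rw [evalP_powerSum_add_three, ih₂, ih₁, ih₀, Matrix.trace_pow_add_three_fin_three, hA,
      one_mul]

end
end
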